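/- Let α > 0 and let θ_α > 0 be the unique nonzero root of cosh(θ) − 1 − αθ = 0. If W is a rate-1 continuous-time simple random walk on ℤ started at an integer x ≤ 0, then P[ ∃ t ≥ 0 : W_t − αt > 0 ] ≤ e^{θ_α x}; moreover θ_α = 2α + O(α²) as α → 0. -/

import Mathlib

/-!
At the positive root θ of `cosh θ - 1 = α θ`, the exponent of the moment generating function
`E[e^{θ W_t}] = e^{t (cosh θ - 1)}` (summed from the Skellam marginal) equals `α θ t`, so along any
time grid `M_t = e^{θ (W_t - α t)}` is a mean-one martingale by independence of increments.
Ville's maximal inequality bounds the probability that `M` ever reaches `e^{-θ x}` by `e^{θ x}`,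
and right-continuity of the paths lets the dyadic grids see every escape time.
The root is unique because `cosh` is strictly convex, and `θ = 2α + O(α²)` follows from
`1 + θ²/2 ≤ cosh θ ≤ 1 + θ²/2 + θ⁴/4` near `0`.
-/

open MeasureTheory ProbabilityTheory Filter Set Topology

noncomputable section

/-- A continuous-time simple random walk on `ℤ` with jump rate `1`, started at `0`:
at rate `1` it jumps to `±1` with probability `1/2` each.  The law is axiomatized via
right-continuous step paths with jumps of size `1`, stationary independent increments,
and the explicit one-dimensional marginal distribution (the difference of two independent
`Poisson (t/2)` variables). -/
structure SRW (Ω : Type) [MeasurableSpace Ω] where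
  μ : Measure Ω
  prob : IsProbabilityMeasure μ
  W : ℝ → Ω → ℤ
  meas : ∀ t : ℝ, Measurable (W t)
  start : ∀ t : ℝ, t ≤ 0 → ∀ ω, W t ω = 0
  right_const : ∀ ω, ∀ t : ℝ, ∃ ε > 0, ∀ s ∈ Set.Ico t (t + ε), W s ω = W t ω
  unit_jumps : ∀ ω, ∀ t : ℝ, ∃ ε > 0, ∀ s ∈ Set.Ioo (t - ε) t, (W t ω - W s ω).natAbs ≤ 1
  marginal : ∀ t : ℝ, 0 ≤ t → ∀ k : ℤ,
    μ {ω | W t ω = k} = ENNReal.ofReal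
      (Real.exp (-t) * ∑' n : ℕ, (t / 2) ^ (2 * n + k.natAbs) /
        (n.factorial * (n + k.natAbs).factorial))
  stationary : ∀ s t : ℝ, 0 ≤ s → s ≤ t →
    μ.map (fun ω => W t ω - W s ω) = μ.map (W (t - s))
  indep_incr : ∀ n : ℕ, ∀ t : Fin (n + 1) → ℝ, Monotone t → 0 ≤ t 0 →
    iIndepFun (m := fun _ => inferInstance)
      (fun i : Fin n => fun ω => W (t i.succ) ω - W (t i.castSucc) ω) μ

open Real
open scoped Nat NNReal ENNReal

namespace Real

lemma one_add_sq_div_two_le_cosh (x : ℝ) : 1 + x ^ 2 / 2 ≤ cosh x := by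
  have h := sum_le_hasSum (Finset.range 2) (fun n _ => by rw [pow_mul]; positivity)
    (hasSum_cosh x)
  norm_num [Finset.sum_range_succ] at h
  linarith

lemma cosh_le_one_add_sq_div_two_add {x : ℝ} (hx : x ^ 2 ≤ 2) :
    cosh x ≤ 1 + x ^ 2 / 2 + x ^ 4 / 4 := by
  have h := abs_exp_sub_one_sub_id_le (x := x ^ 2 / 2)
    (by rw [abs_of_nonneg (by positivity)]; linarith)
  have := (abs_le.1 h).2
  linarith [cosh_le_exp_half_sq x]

lemma strictConvexOn_cosh : StrictConvexOn ℝ univ cosh :=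
  StrictMono.strictConvexOn_univ_of_deriv continuous_cosh (deriv_cosh ▸ sinh_strictMono)

end Real

lemma existsUnique_pos_cosh_sub_one_sub_mul_eq_zero {α : ℝ} (hα : 0 < α) :
    ∃! θ : ℝ, 0 < θ ∧ cosh θ - 1 - α * θ = 0 := by
  set f : ℝ → ℝ := fun θ => cosh θ - 1 - α * θ
  have hr : 0 < min α 1 := lt_min hα one_pos
  have hneg : f (min α 1) < 0 := by
    have h1 : min α 1 ≤ α := min_le_left _ _
    have h2 : min α 1 ≤ 1 := min_le_right _ _
    have hsq : min α 1 ^ 2 ≤ 1 := pow_le_one₀ hr.le h2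
    have h4 : min α 1 ^ 4 ≤ min α 1 ^ 2 := by nlinarith
    have := cosh_le_one_add_sq_div_two_add (x := min α 1) (by linarith)
    simp only [f]
    nlinarith [mul_pos hr hr]
  have hpos : 0 < f (2 * α + 1) := by
    have := one_add_sq_div_two_le_cosh (2 * α + 1)
    simp only [f]
    nlinarith
  obtain ⟨θ, hθ, hθ0⟩ := intermediate_value_Ioo (by linarith [min_le_right α 1])
    (by fun_prop : Continuous f).continuousOn ⟨hneg, hpos⟩
  refine ⟨θ, ⟨hr.trans hθ.1, hθ0⟩, ?_⟩
  -- a second positive root would put three collinear points on the graph of `cosh`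
  have key : ∀ u v : ℝ, 0 < u → u < v → f u = 0 → f v = 0 → False := by
    intro u v hu huv hfu hfv
    have hv : 0 < v := hu.trans huv
    have h := strictConvexOn_cosh.2 (mem_univ 0) (mem_univ v) hv.ne
      (sub_pos.2 ((div_lt_one hv).2 huv)) (div_pos hu hv) (sub_add_cancel 1 (u / v))
    simp only [smul_eq_mul, mul_zero, zero_add, cosh_zero, div_mul_cancel₀ u hv.ne'] at h
    have hchord : (1 - u / v) * 1 + u / v * cosh v = 1 + α * u := by
      simp only [f] at hfv
      rw [show cosh v = 1 + α * v by linarith]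
      field_simp
      ring
    simp only [f] at hfu
    linarith
  rintro θ' ⟨hθ', hθ'0⟩
  rcases lt_trichotomy θ' θ with h | h | h
  · exact (key θ' θ hθ' h hθ'0 hθ0).elim
  · exact h
  · exact (key θ θ' (hr.trans hθ.1) h hθ0 hθ'0).elim

lemma abs_sub_two_mul_le_of_cosh_sub_one_sub_mul_eq_zero {α θ : ℝ} (hα : α ≤ 1 / 2)
    (hθ : 0 < θ) (h : cosh θ - 1 - α * θ = 0) : |θ - 2 * α| ≤ 2 * α ^ 2 := by
  have hlow := one_add_sq_div_two_le_cosh θ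
  have hθα : θ ≤ 2 * α := by nlinarith
  have hupp := cosh_le_one_add_sq_div_two_add (x := θ) (by nlinarith)
  have h1 : 2 * α - θ ≤ θ ^ 3 / 2 := by nlinarith
  have h2 : θ ^ 3 ≤ (2 * α) ^ 3 := pow_le_pow_left₀ hθ.le hθα 3
  rw [abs_of_nonpos (by linarith)]
  nlinarith

lemma ENNReal.tsum_ofReal_pow_div_factorial {x : ℝ} (hx : 0 ≤ x) :
    ∑' n : ℕ, ENNReal.ofReal (x ^ n / n !) = ENNReal.ofReal (exp x) := by
  have h := NormedSpace.expSeries_div_hasSum_exp x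
  rw [← exp_eq_exp_ℝ] at h
  rw [← ENNReal.ofReal_tsum_of_nonneg (fun n => by positivity) h.summable, h.tsum_eq]

lemma summable_pow_two_mul_add_div_factorial_mul_factorial {c : ℝ} (hc : 0 ≤ c) (m : ℕ) :
    Summable (fun n : ℕ => c ^ (2 * n + m) / (n ! * (n + m)!)) := by
  refine ((Real.summable_pow_div_factorial (c ^ 2)).mul_left (c ^ m)).of_nonneg_of_le
    (fun n => by positivity) (fun n => ?_)
  rw [pow_add, pow_mul, mul_comm ((c ^ 2) ^ n), mul_div_assoc]
  gcongr
  exact le_mul_of_one_le_right (by positivity) (by exact_mod_cast (n + m).factorial_pos)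

/-- The two Poisson counts behind the value `k` of a Skellam variable. -/
def skellamEquiv : ℤ × ℕ ≃ ℕ × ℕ where
  toFun p := (p.2 + p.1.toNat, p.2 + (-p.1).toNat)
  invFun q := ((q.1 : ℤ) - q.2, min q.1 q.2)
  left_inv := by rintro ⟨k, n⟩; simp only [Prod.mk.injEq]; omega
  right_inv := by rintro ⟨a, b⟩; simp only [Prod.mk.injEq]; omega

lemma exp_mul_pow_div_factorial_eq_skellamEquiv (θ c : ℝ) (k : ℤ) (n : ℕ) :
    exp (θ * k) * (c ^ (2 * n + k.natAbs) / (n ! * (n + k.natAbs)!)) =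
      (exp θ * c) ^ (skellamEquiv (k, n)).1 / (skellamEquiv (k, n)).1 ! *
        ((exp (-θ) * c) ^ (skellamEquiv (k, n)).2 / (skellamEquiv (k, n)).2 !) := by
  have hexp : (exp (-θ) * exp θ) ^ n = 1 := by rw [← exp_add, neg_add_cancel, exp_zero, one_pow]
  obtain ⟨m, rfl | rfl⟩ := Int.eq_nat_or_neg k <;>
    simp only [skellamEquiv, Equiv.coe_fn_mk, Int.natAbs_neg, Int.natAbs_natCast, neg_neg,
      Int.toNat_natCast, Int.toNat_neg_natCast, add_zero, Int.cast_neg, Int.cast_natCast] <;>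
    field_simp
  · rw [mul_comm θ, exp_nat_mul]
    linear_combination (-(exp θ ^ m * c ^ (2 * n + m))) * hexp
  · rw [mul_comm θ, ← mul_neg, exp_nat_mul]
    linear_combination (-(exp (-θ) ^ m * c ^ (2 * n + m))) * hexp

lemma tsum_exp_mul_mul_skellam (θ : ℝ) {t : ℝ} (ht : 0 ≤ t) :
    ∑' k : ℤ, ENNReal.ofReal (exp (θ * k)) * ENNReal.ofReal (exp (-t) *
      ∑' n : ℕ, (t / 2) ^ (2 * n + k.natAbs) / (n ! * (n + k.natAbs)!))
    = ENNReal.ofReal (exp (t * (cosh θ - 1))) := by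
  have ht2 : 0 ≤ t / 2 := by positivity
  calc _ = ENNReal.ofReal (exp (-t)) * ∑' k : ℤ, ∑' n : ℕ, ENNReal.ofReal (exp (θ * k) *
        ((t / 2) ^ (2 * n + k.natAbs) / (n ! * (n + k.natAbs)!))) := by
        rw [← ENNReal.tsum_mul_left]
        refine tsum_congr fun k => ?_
        rw [ENNReal.ofReal_mul (by positivity), ENNReal.ofReal_tsum_of_nonneg
          (fun n => by positivity) (summable_pow_two_mul_add_div_factorial_mul_factorial ht2 _),
          mul_left_comm, ← ENNReal.tsum_mul_left]
        simp only [← ENNReal.ofReal_mul (exp_nonneg _)]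
    _ = ENNReal.ofReal (exp (-t)) * ∑' q : ℕ × ℕ,
          ENNReal.ofReal ((exp θ * (t / 2)) ^ q.1 / q.1 !) *
          ENNReal.ofReal ((exp (-θ) * (t / 2)) ^ q.2 / q.2 !) := by
        rw [← ENNReal.tsum_prod, ← skellamEquiv.tsum_eq]
        congr 1
        refine tsum_congr fun p => ?_
        rw [← ENNReal.ofReal_mul (by positivity), exp_mul_pow_div_factorial_eq_skellamEquiv]
    _ = ENNReal.ofReal (exp (t * (cosh θ - 1))) := by
        simp only [ENNReal.tsum_prod', ENNReal.tsum_mul_left, ENNReal.tsum_mul_right,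
          ENNReal.tsum_ofReal_pow_div_factorial (by positivity : 0 ≤ exp θ * (t / 2)),
          ENNReal.tsum_ofReal_pow_div_factorial (by positivity : 0 ≤ exp (-θ) * (t / 2)),
          ← ENNReal.ofReal_mul (exp_nonneg _), ← exp_add]
        rw [cosh_eq]
        ring_nf

section ExponentialMartingale

variable {Ω : Type*} {m0 : MeasurableSpace Ω} {μ : Measure Ω}

theorem MeasureTheory.Martingale.mul_measure_exists_le_le [IsFiniteMeasure μ] {f : ℕ → Ω → ℝ}
    {𝒢 : Filtration ℕ m0} (hf : Martingale f 𝒢 μ) (hnonneg : 0 ≤ f) (ε : ℝ≥0) :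
    ε * μ {ω | ∃ k, (ε : ℝ) ≤ f k ω} ≤ ENNReal.ofReal (∫ ω, f 0 ω ∂μ) := by
  have hunion : {ω | ∃ k, (ε : ℝ) ≤ f k ω} = ⋃ n, {ω | ∃ k ≤ n, (ε : ℝ) ≤ f k ω} := by
    ext ω
    simp only [mem_ofPred_eq, mem_iUnion]
    exact ⟨fun ⟨k, hk⟩ => ⟨k, k, le_rfl, hk⟩, fun ⟨_, k, _, hk⟩ => ⟨k, hk⟩⟩
  have hmono : Monotone fun n => {ω | ∃ k ≤ n, (ε : ℝ) ≤ f k ω} :=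
    fun n n' hn _ ⟨k, hk, h⟩ => ⟨k, hk.trans hn, h⟩
  rw [hunion, hmono.measure_iUnion, ENNReal.mul_iSup]
  refine iSup_le fun n => ?_
  have hsup : {ω | ∃ k ≤ n, (ε : ℝ) ≤ f k ω} =
      {ω | (ε : ℝ) ≤ (Finset.range (n + 1)).sup' Finset.nonempty_range_add_one fun k => f k ω} := by
    ext ω
    simp [Finset.le_sup'_iff]
  rw [hsup]
  refine (maximal_ineq hf.submartingale hnonneg n).trans (ENNReal.ofReal_le_ofReal ?_)
  calc _ ≤ ∫ ω, f n ω ∂μ :=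
        setIntegral_le_integral (hf.integrable n) (Eventually.of_forall (hnonneg n))
    _ = ∫ ω, f 0 ω ∂μ := by
        simpa using (hf.setIntegral_eq (Nat.zero_le n) MeasurableSet.univ).symm

variable {Y : ℕ → Ω → ℤ}

theorem indep_natural_comap_increment (hY : ∀ k, Measurable (Y k)) (hY0 : Y 0 = 0)
    (hind : ∀ n, iIndepFun (fun (i : Fin n) ω => Y (i + 1) ω - Y i ω) μ) (k : ℕ) :
    Indep (Filtration.natural Y (fun j => (hY j).stronglyMeasurable) k)
      (MeasurableSpace.comap (fun ω => Y (k + 1) ω - Y k ω) inferInstance) μ := by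
  set X : Fin (k + 1) → Ω → ℤ := fun i ω => Y (i + 1) ω - Y i ω
  have hX : ∀ i, Measurable (X i) := fun i => (hY _).sub (hY _)
  have h := indep_iSup_of_disjoint (fun i => (hX i).comap_le)
    ((iIndepFun_iff_iIndep _ _ _).1 (hind (k + 1)))
    (S := {i | (i : ℕ) < k}) (T := {Fin.last k})
    (Set.disjoint_singleton_right.2 fun h => by simp at h)
  refine indep_of_indep_of_le_right (indep_of_indep_of_le_left h ?_) ?_
  · refine iSup₂_le fun j hj => Measurable.comap_le ?_
    have hsum : Y j = fun ω => ∑ i ∈ Finset.range j, (Y (i + 1) ω - Y i ω) := by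
      ext ω
      simp [Finset.sum_range_sub (fun i => Y i ω), hY0]
    rw [hsum]
    refine Finset.measurable_sum _ fun i hi => ?_
    have hik : i < k := (Finset.mem_range.1 hi).trans_le hj
    exact Measurable.of_comap_le
      (le_iSup₂_of_le (f := fun i (_ : i ∈ {i : Fin (k + 1) | (i : ℕ) < k}) => _)
        ⟨i, by omega⟩ hik le_rfl)
  · exact le_iSup₂_of_le (f := fun i (_ : i ∈ ({Fin.last k} : Set (Fin (k + 1)))) => _)
      (Fin.last k) rfl le_rfl

theorem martingale_exp_mul_sub_mul [IsProbabilityMeasure μ] (hY : ∀ k, Measurable (Y k))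
    (hY0 : Y 0 = 0) (hind : ∀ n, iIndepFun (fun (i : Fin n) ω => Y (i + 1) ω - Y i ω) μ)
    {θ c : ℝ} (hint : ∀ k, Integrable (fun ω => exp (θ * Y k ω)) μ)
    (hmgf : ∀ k, ∫ ω, exp (θ * (Y (k + 1) ω - Y k ω : ℤ)) ∂μ = exp c) :
    Martingale (fun k ω => exp (θ * Y k ω - k * c))
      (Filtration.natural Y fun k => (hY k).stronglyMeasurable) μ := by
  set 𝒢 := Filtration.natural Y fun k => (hY k).stronglyMeasurable
  set M : ℕ → Ω → ℝ := fun k ω => exp (θ * Y k ω - k * c)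
  have hM : ∀ k, Measurable[𝒢 k] (M k) := fun k =>
    (measurable_of_countable (fun z : ℤ => exp (θ * z - k * c))).comp
      (Measurable.of_comap_le (le_iSup₂_of_le k le_rfl le_rfl))
  refine martingale_of_setIntegral_eq_succ (fun k => (hM k).stronglyMeasurable)
    (fun k => by simpa only [M, exp_sub] using (hint k).div_const (exp (k * c))) fun k s hs => ?_
  set G : Ω → ℝ := fun ω => exp (θ * (Y (k + 1) ω - Y k ω : ℤ) - c)
  have hG : Measurable[MeasurableSpace.comap (fun ω => Y (k + 1) ω - Y k ω) inferInstance] G :=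
    (measurable_of_countable (fun z : ℤ => exp (θ * z - c))).comp (comap_measurable _)
  have hindep : IndepFun (s.indicator (M k)) G μ := by
    rw [IndepFun_iff_Indep]
    exact indep_of_indep_of_le_right (indep_of_indep_of_le_left
      (indep_natural_comap_increment hY hY0 hind k) ((hM k).indicator hs).comap_le) hG.comap_le
  have hGint : ∫ ω, G ω ∂μ = 1 := by
    simp only [G, exp_sub, integral_div, hmgf, div_self (exp_pos c).ne']
  have hsucc : ∀ ω, M (k + 1) ω = M k ω * G ω := fun ω => by
    simp only [M, G, ← exp_add]
    push_cast
    ring_nf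
  calc ∫ ω in s, M k ω ∂μ = (∫ ω, s.indicator (M k) ω ∂μ) * ∫ ω, G ω ∂μ := by
        rw [hGint, mul_one, integral_indicator (𝒢.le k s hs)]
    _ = ∫ ω in s, M (k + 1) ω ∂μ := by
        rw [← hindep.integral_mul_eq_mul_integral
          (((hM k).indicator hs).mono (𝒢.le k) le_rfl).aestronglyMeasurable
          (hG.mono ((hY _).sub (hY _)).comap_le le_rfl).aestronglyMeasurable,
          ← integral_indicator (𝒢.le k s hs)]
        congr 1
        funext ω
        simp only [Pi.mul_apply, ← indicator_mul_left, ← hsucc]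

end ExponentialMartingale

theorem exists_nat_mul_inv_two_pow_mem_Ico {t ε : ℝ} (ht : 0 ≤ t) (hε : 0 < ε) :
    ∃ n k : ℕ, (k : ℝ) * ((2 : ℝ) ^ n)⁻¹ ∈ Ico t (t + ε) := by
  obtain ⟨n, hn⟩ := exists_pow_lt_of_lt_one hε (by norm_num : (2 : ℝ)⁻¹ < 1)
  rw [inv_pow] at hn
  have h2n : (0 : ℝ) < 2 ^ n := by positivity
  refine ⟨n, ⌈t * 2 ^ n⌉₊, ?_, ?_⟩
  · rw [← div_eq_mul_inv, le_div_iff₀ h2n]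
    exact Nat.le_ceil _
  · calc (⌈t * 2 ^ n⌉₊ : ℝ) * (2 ^ n)⁻¹ < (t * 2 ^ n + 1) * (2 ^ n)⁻¹ := by
          gcongr
          exact Nat.ceil_lt_add_one (by positivity)
      _ = t + (2 ^ n)⁻¹ := by field_simp
      _ < t + ε := by linarith

theorem exists_nat_mul_inv_two_pow_of_le {P : ℝ → Prop} {n m : ℕ} (hnm : n ≤ m)
    (h : ∃ k : ℕ, P (k * ((2 : ℝ) ^ n)⁻¹)) : ∃ k : ℕ, P (k * ((2 : ℝ) ^ m)⁻¹) := by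
  obtain ⟨k, hk⟩ := h
  obtain ⟨d, rfl⟩ := Nat.exists_eq_add_of_le hnm
  have hgrid : ((k * 2 ^ d : ℕ) : ℝ) * ((2 : ℝ) ^ (n + d))⁻¹ = k * ((2 : ℝ) ^ n)⁻¹ := by
    push_cast
    rw [pow_add]
    field_simp
  exact ⟨k * 2 ^ d, hgrid ▸ hk⟩

namespace SRW

variable {Ω : Type} [MeasurableSpace Ω] (w : SRW Ω)

theorem lintegral_ofReal_exp_mul (θ : ℝ) {t : ℝ} (ht : 0 ≤ t) :
    ∫⁻ ω, ENNReal.ofReal (exp (θ * w.W t ω)) ∂w.μ = ENNReal.ofReal (exp (t * (cosh θ - 1))) := by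
  rw [← lintegral_map (measurable_of_countable fun k : ℤ => ENNReal.ofReal (exp (θ * k)))
    (w.meas t), lintegral_countable']
  have hmarg : ∀ k : ℤ, w.μ.map (w.W t) {k} = ENNReal.ofReal (exp (-t) *
      ∑' n : ℕ, (t / 2) ^ (2 * n + k.natAbs) / (n ! * (n + k.natAbs)!)) := fun k => by
    rw [Measure.map_apply (w.meas t) (measurableSet_singleton _)]
    exact w.marginal t ht k
  simp_rw [hmarg]
  exact tsum_exp_mul_mul_skellam θ ht

theorem integrable_exp_mul (θ : ℝ) {t : ℝ} (ht : 0 ≤ t) :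
    Integrable (fun ω => exp (θ * w.W t ω)) w.μ := by
  refine (lintegral_ofReal_ne_top_iff_integrable (f := fun ω => exp (θ * w.W t ω))
    ((measurable_of_countable fun k : ℤ => exp (θ * k)).comp (w.meas t)).aestronglyMeasurable
    (Eventually.of_forall fun ω => (exp_pos (θ * w.W t ω)).le)).1 ?_
  rw [w.lintegral_ofReal_exp_mul θ ht]
  exact ENNReal.ofReal_ne_top

theorem integral_exp_mul_sub (θ : ℝ) {s t : ℝ} (hs : 0 ≤ s) (hst : s ≤ t) :
    ∫ ω, exp (θ * (w.W t ω - w.W s ω : ℤ)) ∂w.μ = exp ((t - s) * (cosh θ - 1)) := by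
  have hg : Measurable fun k : ℤ => exp (θ * k) := measurable_of_countable _
  have hinc : Measurable fun ω => w.W t ω - w.W s ω := (w.meas t).sub (w.meas s)
  rw [← integral_map hinc.aemeasurable hg.aestronglyMeasurable,
    w.stationary s t hs hst, integral_map (w.meas _).aemeasurable hg.aestronglyMeasurable,
    integral_eq_lintegral_of_nonneg_ae (Eventually.of_forall fun _ => (exp_pos _).le)
      (hg.comp (w.meas _)).aestronglyMeasurable,
    w.lintegral_ofReal_exp_mul θ (sub_nonneg.2 hst), ENNReal.toReal_ofReal (exp_pos _).le]

theorem iIndepFun_increments_grid {δ : ℝ} (hδ : 0 ≤ δ) (n : ℕ) :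
    iIndepFun (fun (i : Fin n) ω => w.W (((i + 1 : ℕ) : ℝ) * δ) ω - w.W ((i : ℕ) * δ) ω) w.μ :=
  w.indep_incr n (fun i => (i : ℕ) * δ)
    (fun _ _ hij => mul_le_mul_of_nonneg_right (Nat.cast_le.2 hij) hδ) (by simp)

theorem measure_exists_grid_lt_le {α θ δ : ℝ} (hθ : 0 < θ) (hroot : cosh θ - 1 = α * θ)
    (hδ : 0 ≤ δ) (x : ℤ) :
    w.μ {ω | ∃ k : ℕ, 0 < (x : ℝ) + (w.W (k * δ) ω : ℝ) - α * (k * δ)}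
      ≤ ENNReal.ofReal (exp (θ * x)) := by
  have := w.prob
  set Y : ℕ → Ω → ℤ := fun k ω => w.W (k * δ) ω
  have hY0 : Y 0 = 0 := funext fun ω => by simpa [Y] using w.start 0 le_rfl ω
  have hM := martingale_exp_mul_sub_mul (Y := Y) (fun k => w.meas _) hY0
    (w.iIndepFun_increments_grid hδ) (θ := θ) (c := δ * (cosh θ - 1))
    (fun k => w.integrable_exp_mul θ (by positivity))
    fun k => by
      rw [w.integral_exp_mul_sub θ (by positivity) (by gcongr; simp)]
      congr 1
      push_cast
      ring
  have hville := hM.mul_measure_exists_le_le (fun k ω => (exp_pos _).le) (exp (-θ * x)).toNNReal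
  have hsub : {ω | ∃ k : ℕ, 0 < (x : ℝ) + (w.W (k * δ) ω : ℝ) - α * (k * δ)} ⊆
      {ω | ∃ k, ((exp (-θ * x)).toNNReal : ℝ) ≤ exp (θ * Y k ω - k * (δ * (cosh θ - 1)))} := by
    rintro ω ⟨k, hk⟩
    refine ⟨k, ?_⟩
    rw [Real.coe_toNNReal _ (exp_pos _).le, exp_le_exp, hroot]
    nlinarith
  have hM0 : ∫ ω, exp (θ * Y 0 ω - (0 : ℕ) * (δ * (cosh θ - 1))) ∂w.μ = 1 := by simp [hY0]
  rw [hM0, ENNReal.ofReal_one, mul_comm] at hville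
  calc _ ≤ _ := measure_mono hsub
    _ ≤ (ENNReal.ofReal (exp (-θ * x)))⁻¹ := ENNReal.le_inv_iff_mul_le.2 hville
    _ = ENNReal.ofReal (exp (θ * x)) := by
        rw [← ENNReal.ofReal_inv_of_pos (exp_pos _), ← exp_neg, neg_mul, neg_neg]

theorem eventually_nhdsGE_pos (ω : Ω) {α t : ℝ} {x : ℤ}
    (h : 0 < (x : ℝ) + (w.W t ω : ℝ) - α * t) :
    ∀ᶠ s in 𝓝[≥] t, 0 < (x : ℝ) + (w.W s ω : ℝ) - α * s := by
  obtain ⟨ε, hε, hconst⟩ := w.right_const ω t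
  have hcont : ∀ᶠ s in 𝓝[≥] t, 0 < (x : ℝ) + (w.W t ω : ℝ) - α * s :=
    nhdsWithin_le_nhds (((by fun_prop : Continuous fun s : ℝ =>
      (x : ℝ) + (w.W t ω : ℝ) - α * s).tendsto t).eventually_const_lt h)
  filter_upwards [hcont, Ico_mem_nhdsGE (lt_add_of_pos_right t hε)] with s hs hsI
  rwa [hconst s hsI]

theorem measure_exists_pos_le {α θ : ℝ} (hθ : 0 < θ) (hroot : cosh θ - 1 = α * θ) (x : ℤ) :
    w.μ {ω | ∃ t : ℝ, 0 ≤ t ∧ 0 < (x : ℝ) + (w.W t ω : ℝ) - α * t}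
      ≤ ENNReal.ofReal (exp (θ * x)) := by
  set D : ℕ → Set Ω := fun n => {ω | ∃ k : ℕ,
    0 < (x : ℝ) + (w.W (k * ((2 : ℝ) ^ n)⁻¹) ω : ℝ) - α * (k * ((2 : ℝ) ^ n)⁻¹)}
  have hsub : {ω | ∃ t : ℝ, 0 ≤ t ∧ 0 < (x : ℝ) + (w.W t ω : ℝ) - α * t} ⊆ ⋃ n, D n := by
    rintro ω ⟨t, ht, hpos⟩
    obtain ⟨u, hu, hIco⟩ := mem_nhdsGE_iff_exists_Ico_subset.1 (w.eventually_nhdsGE_pos ω hpos)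
    obtain ⟨n, k, hk⟩ := exists_nat_mul_inv_two_pow_mem_Ico ht (sub_pos.2 hu)
    exact mem_iUnion.2 ⟨n, k, hIco (by rwa [add_sub_cancel] at hk)⟩
  have hmono : Monotone D := fun n m hnm ω hω =>
    exists_nat_mul_inv_two_pow_of_le (P := fun s => 0 < (x : ℝ) + (w.W s ω : ℝ) - α * s) hnm hω
  calc _ ≤ w.μ (⋃ n, D n) := measure_mono hsub
    _ = ⨆ n, w.μ (D n) := hmono.measure_iUnion
    _ ≤ _ := iSup_le fun n => w.measure_exists_grid_lt_le hθ hroot (by positivity) x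

end SRW

/-- Let `α > 0` and let `θ_α > 0` be the unique nonzero root of `cosh θ - 1 - αθ = 0`.
For a rate-1 continuous-time simple random walk started at an integer `x ≤ 0` (i.e. `x + W`),
`P[ ∃ t ≥ 0, x + W_t - αt > 0 ] ≤ e^(θ_α x)`; moreover `θ_α = 2α + O(α²)` as `α → 0`. -/
theorem drifted_walk_escape {Ω : Type} [MeasurableSpace Ω] (w : SRW Ω) :
    (∀ α : ℝ, 0 < α →
      (∃! θ : ℝ, 0 < θ ∧ Real.cosh θ - 1 - α * θ = 0) ∧
      ∀ θ : ℝ, 0 < θ → Real.cosh θ - 1 - α * θ = 0 →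
        ∀ x : ℤ, x ≤ 0 →
          w.μ {ω | ∃ t : ℝ, 0 ≤ t ∧ 0 < (x : ℝ) + (w.W t ω : ℝ) - α * t}
            ≤ ENNReal.ofReal (Real.exp (θ * (x : ℝ)))) ∧
    (∃ C : ℝ, 0 < C ∧ ∃ α₀ : ℝ, 0 < α₀ ∧
      ∀ α : ℝ, 0 < α → α < α₀ →
        ∀ θ : ℝ, 0 < θ → Real.cosh θ - 1 - α * θ = 0 → |θ - 2 * α| ≤ C * α ^ 2) := by
  refine ⟨fun α hα => ⟨existsUnique_pos_cosh_sub_one_sub_mul_eq_zero hα,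
    fun θ hθ hroot x _ => w.measure_exists_pos_le hθ (by linarith) x⟩,
    2, two_pos, 1 / 2, one_half_pos, fun α _ hα θ hθ hroot => ?_⟩
  exact abs_sub_two_mul_le_of_cosh_sub_one_sub_mul_eq_zero hα.le hθ hroot

end
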